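/- Let m, n > 0 be integers and let (q₁, …, q_m) be a tuple of Dyck paths in D_n with q₁ ≤_dom q₂ ≤_dom ⋯ ≤_dom q_m, and let h^{(j)} = (h₁^{(j)}, …, h_n^{(j)}) be the height sequence of q_j. Then (q₁, …, q_m) lies in the image of the strip-decomposition map δ : D_n^(m) → (D_n)^m if and only if h_i^{(k)} ≤ h_{i+1}^{(j)} for all i ∈ {1, …, n−2} and all indices 1 ≤ j < k ≤ m. -/

import Mathlib

/-- The height sequence of a step sequence `u : Fin n → ℕ`:
`h_k = max { j ∈ {1,…,n} : u_j < k }` (1-indexed in both `j` and `k`). -/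
noncomputable def heightSeq (n : ℕ) (u : Fin n → ℕ) (k : ℕ) : ℕ :=
  sSup {j : ℕ | ∃ h : j - 1 < n, 1 ≤ j ∧ u ⟨j - 1, h⟩ < k}

/-- The step sequence of the Dyck path in `D_n` whose height sequence is
`(g 1, g 2, …, g n)`: its `j`-th entry (0-indexed) is `#{ t ∈ {1,…,n} : g t < j + 1 }`. -/
noncomputable def stepOfHeight (n : ℕ) (g : ℕ → ℕ) : Fin n → ℕ :=
  fun j => Set.ncard {t : ℕ | 1 ≤ t ∧ t ≤ n ∧ g t < (j : ℕ) + 1}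

/-- The strip decomposition `δ : D_n^(m) → (D_n)^m`: the `i`-th component (1-indexed `i`)
is the Dyck path whose height sequence is `(h_i, h_{i+m}, …, h_{i+(n−1)m})`, where
`(h_1, …, h_{mn})` is the height sequence of `u`. -/
noncomputable def strip (m n : ℕ) (u : Fin n → ℕ) : Fin m → Fin n → ℕ :=
  fun i => stepOfHeight n (fun t => heightSeq n u (((i : ℕ) + 1) + (t - 1) * m))

/-!
The strips of an `m`-Dyck path read its height sequence `(h_1, …, h_{mn})` as an `n × m` array,
so `(q_1, …, q_m)` is a strip decomposition iff the interleaving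
`h^{(1)}_1, …, h^{(m)}_1, h^{(1)}_2, …, h^{(m)}_2, …` of the height sequences of the `q_j` is the
height sequence of an `m`-Dyck path; the path is then recovered by counting,
`u_j = #{p | h_p ≤ j}`. Since the `q_j` are Dyck paths, the interleaving satisfies the lower
bound `h_k ≥ ⌈k/m⌉`, and the only issue is monotonicity. Inside a block of `m` entries it is
dominance; across blocks it is `h^{(m)}_i ≤ h^{(1)}_{i+1}`, which together with dominance is
equivalent to `h^{(k)}_i ≤ h^{(j)}_{i+1}` for all `j < k`, and which is automatic at `i = n - 1`
because `h^{(1)}_n = n`.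
-/

open Finset

section HeightSeq

variable {n : ℕ} {u : Fin n → ℕ}

lemma heightSeq_le_of_forall {k b : ℕ} (h : ∀ j : Fin n, u j < k → (j : ℕ) < b) :
    heightSeq n u k ≤ b := by
  refine csSup_le' ?_
  rintro j ⟨hj, hj1, hlt⟩
  have := h ⟨j - 1, hj⟩ hlt
  simp only at this
  omega

lemma heightSeq_le_length (u : Fin n → ℕ) (k : ℕ) : heightSeq n u k ≤ n :=
  heightSeq_le_of_forall fun j _ => j.isLt

lemma le_heightSeq {k : ℕ} (j : Fin n) (h : u j < k) : (j : ℕ) + 1 ≤ heightSeq n u k := by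
  refine le_csSup ⟨n, ?_⟩ ⟨by simp, by omega, by simpa using h⟩
  rintro i ⟨hi, -, -⟩
  omega

lemma heightSeq_mono (u : Fin n → ℕ) : Monotone (heightSeq n u) := fun _ _ hkk' =>
  heightSeq_le_of_forall fun j hj => le_heightSeq j (hj.trans_le hkk')

lemma heightSeq_eq_of_forall_lt_iff {k g : ℕ} (hg : g ≤ n)
    (h : ∀ j : Fin n, u j < k ↔ (j : ℕ) < g) : heightSeq n u k = g := by
  refine le_antisymm (heightSeq_le_of_forall fun j => (h j).1) ?_
  rcases Nat.eq_zero_or_pos g with rfl | hg0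
  · exact Nat.zero_le _
  · have := le_heightSeq (u := u) (k := k) ⟨g - 1, by omega⟩ ((h _).2 (Nat.sub_lt hg0 one_pos))
    simp only at this
    omega

lemma lt_heightSeq_iff (hu : Monotone u) (j : Fin n) (k : ℕ) :
    (j : ℕ) < heightSeq n u k ↔ u j < k := by
  refine ⟨fun hj => ?_, fun h => le_heightSeq j h⟩
  by_contra! hk
  refine hj.not_ge (heightSeq_le_of_forall fun i hi => ?_)
  by_contra! hji
  exact (hk.trans (hu (Fin.le_def.2 hji))).not_gt hi

lemma heightSeq_length (hu : Monotone u) (hub : ∀ k : Fin n, u k ≤ k) :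
    heightSeq n u n = n := by
  cases n with
  | zero => exact Nat.le_zero.1 (heightSeq_le_length u 0)
  | succ n =>
    exact le_antisymm (heightSeq_le_length u _)
      ((lt_heightSeq_iff hu (Fin.last n) _).2 (Nat.lt_succ_of_le (hub _)))

end HeightSeq

section Count

variable {L : ℕ} {H : ℕ → ℕ}

-- `{p' | H p' ≤ j}` is an initial segment of `[1, L]` because `H` is monotone there.
lemma card_filter_le_lt_iff (hH : MonotoneOn H (Set.Icc 1 L)) {p : ℕ} (hp : p ∈ Set.Icc 1 L)
    (j : ℕ) : #{p' ∈ Icc 1 L | H p' ≤ j} < p ↔ j < H p := by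
  obtain ⟨hp1, hpL⟩ := hp
  constructor
  · intro hcard
    by_contra! hHp
    have hsub : Icc 1 p ⊆ {p' ∈ Icc 1 L | H p' ≤ j} := fun p' hp' => by
      simp only [mem_Icc, mem_filter] at hp' ⊢
      have hp'L := hp'.2.trans hpL
      exact ⟨⟨hp'.1, hp'L⟩, (hH ⟨hp'.1, hp'L⟩ ⟨hp1, hpL⟩ hp'.2).trans hHp⟩
    have := card_le_card hsub
    simp only [Nat.card_Icc, add_tsub_cancel_right] at this
    omega
  · intro hjH
    have hsub : {p' ∈ Icc 1 L | H p' ≤ j} ⊆ Icc 1 (p - 1) := fun p' hp' => by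
      simp only [mem_Icc, mem_filter] at hp' ⊢
      refine ⟨hp'.1.1, ?_⟩
      by_contra! hpp'
      exact ((hjH.trans_le (hH ⟨hp1, hpL⟩ hp'.1 (by omega))).not_ge hp'.2)
    have := card_le_card hsub
    simp only [Nat.card_Icc, add_tsub_cancel_right] at this
    omega

lemma heightSeq_card_filter_le {n : ℕ} (hH : MonotoneOn H (Set.Icc 1 L))
    (hHn : ∀ p ∈ Set.Icc 1 L, H p ≤ n) {p : ℕ} (hp : p ∈ Set.Icc 1 L) :
    heightSeq n (fun j : Fin n => #{p' ∈ Icc 1 L | H p' ≤ j}) p = H p :=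
  heightSeq_eq_of_forall_lt_iff (hHn p hp) fun j => card_filter_le_lt_iff hH hp j

end Count

section StepOfHeight

variable {n : ℕ}

lemma stepOfHeight_eq_card_filter (g : ℕ → ℕ) (j : Fin n) :
    stepOfHeight n g j = #{t ∈ Icc 1 n | g t ≤ j} := by
  rw [stepOfHeight, ← Set.ncard_coe_finset]
  congr 1
  ext t
  simp [and_assoc]

lemma stepOfHeight_congr {g g' : ℕ → ℕ} (h : ∀ t ∈ Set.Icc 1 n, g t = g' t) :
    stepOfHeight n g = stepOfHeight n g' := by
  funext j
  simp only [stepOfHeight_eq_card_filter]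
  exact congrArg card (filter_congr fun t ht => by rw [h t (by simpa using ht)])

lemma heightSeq_stepOfHeight {g : ℕ → ℕ} (hg : MonotoneOn g (Set.Icc 1 n))
    (hgn : ∀ t ∈ Set.Icc 1 n, g t ≤ n) {t : ℕ} (ht : t ∈ Set.Icc 1 n) :
    heightSeq n (stepOfHeight n g) t = g t := by
  rw [show stepOfHeight n g = fun j : Fin n => #{t ∈ Icc 1 n | g t ≤ j} from
    funext (stepOfHeight_eq_card_filter g)]
  exact heightSeq_card_filter_le hg hgn ht

lemma stepOfHeight_heightSeq {u : Fin n → ℕ} (hu : Monotone u)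
    (hub : ∀ k : Fin n, u k ≤ k) :
    stepOfHeight n (heightSeq n u) = u := by
  funext j
  have hfilter : {t ∈ Icc 1 n | heightSeq n u t ≤ j} = Icc 1 (u j) := by
    ext t
    simp only [mem_filter, mem_Icc, ← not_lt, lt_heightSeq_iff hu]
    have := hub j
    omega
  rw [stepOfHeight_eq_card_filter, hfilter, Nat.card_Icc, add_tsub_cancel_right]

end StepOfHeight

section Strip

variable {m n : ℕ}

lemma heightSeq_strip (u : Fin n → ℕ) (a : Fin m) {s : ℕ} (hs : s ∈ Set.Icc 1 n) :
    heightSeq n (strip m n u a) s = heightSeq n u (a + 1 + (s - 1) * m) :=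
  heightSeq_stepOfHeight
    (fun _ _ _ _ hst => heightSeq_mono u (by gcongr))
    (fun _ _ => heightSeq_le_length _ _) hs

lemma heightSeq_strip_le_succ (u : Fin n → ℕ) (i j : Fin m) {t : ℕ} (ht1 : 1 ≤ t)
    (ht : t + 1 ≤ n) :
    heightSeq n (strip m n u j) t ≤ heightSeq n (strip m n u i) (t + 1) := by
  rw [heightSeq_strip u j ⟨ht1, by omega⟩, heightSeq_strip u i ⟨by omega, ht⟩]
  refine heightSeq_mono u ?_
  obtain ⟨s, rfl⟩ : ∃ s, t = s + 1 := ⟨t - 1, by omega⟩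
  have := j.isLt
  simp only [add_tsub_cancel_right, add_mul, one_mul]
  omega

end Strip

lemma Nat.exists_eq_mul_add_add_one {m p : ℕ} (hm : 0 < m) (hp : 1 ≤ p) :
    ∃ (t : ℕ) (i : Fin m), p = t * m + i + 1 :=
  ⟨(p - 1) / m, ⟨(p - 1) % m, Nat.mod_lt _ hm⟩, by
    have := Nat.div_add_mod' (p - 1) m
    simp only
    omega⟩

section Interleave

variable {m n : ℕ} (hm : 0 < m)

def interleave (g : Fin m → ℕ → ℕ) (p : ℕ) : ℕ :=
  g ⟨(p - 1) % m, Nat.mod_lt _ hm⟩ ((p - 1) / m + 1)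

lemma interleave_apply (g : Fin m → ℕ → ℕ) (t : ℕ) (i : Fin m) :
    interleave hm g (t * m + i + 1) = g i (t + 1) := by
  have hdiv : (t * m + i) / m = t := by
    rw [Nat.add_comm, Nat.add_mul_div_right _ _ hm, Nat.div_eq_of_lt i.isLt, zero_add]
  simp [interleave, hdiv, Nat.mod_eq_of_lt i.isLt]

lemma monotoneOn_interleave {g : Fin m → ℕ → ℕ}
    (hrow : ∀ i j : Fin m, i ≤ j → ∀ t : ℕ, 1 ≤ t → t ≤ n → g i t ≤ g j t)
    (hcross : ∀ i j : Fin m, ∀ t : ℕ, 1 ≤ t → t + 1 ≤ n → g j t ≤ g i (t + 1)) :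
    MonotoneOn (interleave hm g) (Set.Icc 1 (m * n)) := by
  refine monotoneOn_of_le_add_one Set.ordConnected_Icc fun p _ hp hp' => ?_
  obtain ⟨t, i, rfl⟩ := Nat.exists_eq_mul_add_add_one hm hp.1
  have hi := i.isLt
  rw [interleave_apply]
  by_cases hlast : (i : ℕ) + 1 < m
  · have htn : t + 1 ≤ n := by nlinarith [hp'.2]
    rw [show t * m + i + 1 + 1 = t * m + (⟨i + 1, hlast⟩ : Fin m) + 1 from rfl,
      interleave_apply]
    exact hrow _ _ (Fin.le_def.2 (Nat.le_succ _)) _ (Nat.le_add_left _ _) htn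
  · have htn : t + 1 + 1 ≤ n := by nlinarith [hp'.2]
    rw [show t * m + i + 1 + 1 = (t + 1) * m + (⟨0, hm⟩ : Fin m) + 1 by
      simp only [add_mul]; omega, interleave_apply]
    exact hcross _ _ _ (Nat.le_add_left _ _) htn

end Interleave

theorem exists_strip_eq {m n : ℕ} (hm : 0 < m) {q : Fin m → Fin n → ℕ}
    (hq : ∀ i : Fin m, Monotone (q i) ∧ ∀ k : Fin n, q i k ≤ (k : ℕ))
    (hrow : ∀ i j : Fin m, i ≤ j → ∀ t : ℕ, 1 ≤ t → t ≤ n →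
      heightSeq n (q i) t ≤ heightSeq n (q j) t)
    (hcross : ∀ i j : Fin m, ∀ t : ℕ, 1 ≤ t → t + 1 ≤ n →
      heightSeq n (q j) t ≤ heightSeq n (q i) (t + 1)) :
    ∃ u : Fin n → ℕ, (Monotone u ∧ ∀ k : Fin n, u k ≤ m * (k : ℕ)) ∧ strip m n u = q := by
  set H := interleave hm fun a => heightSeq n (q a) with hHdef
  have hH : MonotoneOn H (Set.Icc 1 (m * n)) := monotoneOn_interleave hm hrow hcross
  have hu : ∀ p ∈ Set.Icc 1 (m * n),
      heightSeq n (fun j : Fin n => #{p' ∈ Icc 1 (m * n) | H p' ≤ j}) p = H p :=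
    fun p hp => heightSeq_card_filter_le hH (fun _ _ => heightSeq_le_length _ _) hp
  refine ⟨fun j => #{p ∈ Icc 1 (m * n) | H p ≤ j}, ⟨fun j j' hjj' => ?_, fun k => ?_⟩, ?_⟩
  · exact card_le_card (monotone_filter_right _ fun _ _ hp => hp.trans hjj')
  · have hk : m * k + 1 ∈ Set.Icc 1 (m * n) :=
      ⟨Nat.le_add_left _ _, by nlinarith [k.isLt]⟩
    rw [← Nat.lt_succ_iff, card_filter_le_lt_iff hH hk, mul_comm,
      show k * m + 1 = k * m + (⟨0, hm⟩ : Fin m) + 1 from rfl, hHdef, interleave_apply]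
    exact (lt_heightSeq_iff (hq _).1 k _).2 (Nat.lt_succ_of_le ((hq _).2 k))
  · funext a
    rw [strip, ← stepOfHeight_heightSeq (hq a).1 (hq a).2]
    refine stepOfHeight_congr fun t ht => ?_
    obtain ⟨s, rfl⟩ : ∃ s, t = s + 1 := ⟨t - 1, by have := ht.1; omega⟩
    have hp : a + 1 + s * m ∈ Set.Icc 1 (m * n) :=
      ⟨Nat.le_add_right_of_le (Nat.le_add_left _ _), by nlinarith [a.isLt, ht.2]⟩
    rw [add_tsub_cancel_right, hu _ hp, show (a : ℕ) + 1 + s * m = s * m + a + 1 by ring,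
      hHdef, interleave_apply]

theorem stmt_19_general (m n : ℕ) (hm : 0 < m) (q : Fin m → Fin n → ℕ)
    (hq : ∀ i : Fin m, Monotone (q i) ∧ ∀ k : Fin n, q i k ≤ (k : ℕ))
    (hdom : ∀ i j : Fin m, i ≤ j → ∀ t : ℕ, 1 ≤ t → t ≤ n →
      heightSeq n (q i) t ≤ heightSeq n (q j) t) :
    (∃ u : Fin n → ℕ, (Monotone u ∧ ∀ k : Fin n, u k ≤ m * (k : ℕ)) ∧
        strip m n u = q) ↔
      (∀ t : ℕ, 1 ≤ t → t ≤ n - 2 → ∀ i j : Fin m, i < j →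
        heightSeq n (q j) t ≤ heightSeq n (q i) (t + 1)) := by
  refine ⟨?_, fun hcond => exists_strip_eq hm hq hdom fun i j t ht1 ht => ?_⟩
  · rintro ⟨u, -, rfl⟩ t ht1 ht i j -
    exact heightSeq_strip_le_succ u i j ht1 (by omega)
  rcases lt_or_ge i j with hij | hji
  · by_cases htn : t ≤ n - 2
    · exact hcond t ht1 htn i j hij
    · calc heightSeq n (q j) t ≤ n := heightSeq_le_length _ _
        _ = heightSeq n (q i) (t + 1) := by
          rw [show t + 1 = n by omega, heightSeq_length (hq i).1 (hq i).2]
  · exact (heightSeq_mono _ (Nat.le_succ t)).trans (hdom j i hji _ (by omega) ht)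

/-- A dominance-increasing tuple `(q₁, …, q_m)` of Dyck paths in `D_n`, with height
sequences `h^{(j)}`, lies in the image of the strip decomposition
`δ : D_n^(m) → (D_n)^m` iff `h_i^{(k)} ≤ h_{i+1}^{(j)}` for all `i ∈ {1,…,n−2}` and all
`1 ≤ j < k ≤ m`. -/
theorem stmt_19 (m n : ℕ) (hm : 0 < m) (hn : 0 < n) (q : Fin m → Fin n → ℕ)
    (hq : ∀ i : Fin m, Monotone (q i) ∧ ∀ k : Fin n, q i k ≤ (k : ℕ))
    (hdom : ∀ i j : Fin m, i ≤ j → ∀ t : ℕ, 1 ≤ t → t ≤ n →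
      heightSeq n (q i) t ≤ heightSeq n (q j) t) :
    (∃ u : Fin n → ℕ, (Monotone u ∧ ∀ k : Fin n, u k ≤ m * (k : ℕ)) ∧
        strip m n u = q) ↔
      (∀ t : ℕ, 1 ≤ t → t ≤ n - 2 → ∀ i j : Fin m, i < j →
        heightSeq n (q j) t ≤ heightSeq n (q i) (t + 1)) :=
  stmt_19_general m n hm q hq hdom
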